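/- If x : ℝ → ℝ is differentiable on an interval T and satisfies the autonomous first-order ODE x'(t) = f(x(t)) for all t in T, where f : ℝ → ℝ is continuous, then x is monotone on T (either nondecreasing throughout or nonincreasing throughout). In particular, any solution of the first-order autonomous ODE cannot oscillate: if x(t₁) = x(t₂) for t₁ < t₂ in T, then x is constant on [t₁, t₂]. -/

import Mathlib

/-!
If `F` is a primitive of `f`, the energy `F ∘ x` has derivative `(f ∘ x) ^ 2 ≥ 0`, so it is
nondecreasing. When `x` takes the same value at two times, the energy takes the same value too, so
it is constant in between; its derivative `(f ∘ x) ^ 2 = (x') ^ 2` then vanishes, and `x` is constant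
there. A continuous function with this property has no strict interior extremum on an interval,
hence is monotone.
-/

open Set Filter Topology

def NoReturnOn (x : ℝ → ℝ) (T : Set ℝ) : Prop :=
  ∀ s ∈ T, ∀ t ∈ T, s ≤ t → x s = x t → ∀ u ∈ Icc s t, x u = x s

namespace NoReturnOn

variable {x : ℝ → ℝ} {T : Set ℝ}

theorem neg (h : NoReturnOn x T) : NoReturnOn (-x) T := fun s hs t ht hst hxst u hu => by
  simpa using h s hs t ht hst (neg_inj.1 hxst) u hu

theorem le_max (h : NoReturnOn x T) (hT : T.OrdConnected) (hx : ContinuousOn x T)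
    {a b c : ℝ} (ha : a ∈ T) (hb : b ∈ T) (hc : c ∈ Icc a b) : x c ≤ max (x a) (x b) := by
  by_contra! hlt
  have hab : Icc a b ⊆ T := hT.out ha hb
  obtain ⟨s, hs, hxs⟩ := intermediate_value_Icc hc.1
    (hx.mono ((Icc_subset_Icc_right hc.2).trans hab)) ⟨le_max_left _ _, hlt.le⟩
  obtain ⟨t, ht, hxt⟩ := intermediate_value_Icc' hc.2
    (hx.mono ((Icc_subset_Icc_left hc.1).trans hab)) ⟨le_max_right _ _, hlt.le⟩
  have hxc : x c = x s := h s (hab ⟨hs.1, hs.2.trans hc.2⟩) t (hab ⟨hc.1.trans ht.1, ht.2⟩)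
    (hs.2.trans ht.1) (hxs.trans hxt.symm) c ⟨hs.2, ht.1⟩
  exact hlt.ne' (hxc.trans hxs)

theorem monotoneOn_or_antitoneOn (h : NoReturnOn x T) (hT : T.OrdConnected)
    (hx : ContinuousOn x T) : MonotoneOn x T ∨ AntitoneOn x T := by
  rw [monotoneOn_or_antitoneOn_iff_uIcc]
  intro a ha b hb c _ hc
  wlog hab : a ≤ b generalizing a b
  · rw [uIcc_comm] at hc ⊢
    exact this b hb a ha hc (le_of_not_ge hab)
  rw [uIcc_of_le hab] at hc
  have hmin := h.neg.le_max hT hx.neg ha hb hc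
  simp only [Pi.neg_apply, max_neg_neg, neg_le_neg_iff] at hmin
  exact ⟨hmin, h.le_max hT hx ha hb hc⟩

end NoReturnOn

section AutonomousODE

variable {f x : ℝ → ℝ}

theorem hasDerivAt_integral_comp (hf : Continuous f) {x' t : ℝ} (hx : HasDerivAt x x' t) :
    HasDerivAt (fun s => ∫ u in (0 : ℝ)..x s, f u) (f (x t) * x') t :=
  (hf.integral_hasStrictDerivAt 0 (x t)).hasDerivAt.comp t hx

theorem deriv_eq_zero_of_mem_Ioo_of_eq (hf : Continuous f) (hx : Differentiable ℝ x) {s t : ℝ}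
    (hode : ∀ τ ∈ Icc s t, deriv x τ = f (x τ)) (hxst : x s = x t) :
    ∀ τ ∈ Ioo s t, deriv x τ = 0 := by
  set E : ℝ → ℝ := fun τ => ∫ u in (0 : ℝ)..x τ, f u
  have hE : ∀ τ ∈ Icc s t, HasDerivAt E (f (x τ) ^ 2) τ := fun τ hτ => by
    simpa [sq, hode τ hτ] using hasDerivAt_integral_comp hf (hx τ).hasDerivAt
  have hEmono : MonotoneOn E (Icc s t) := by
    refine monotoneOn_of_deriv_nonneg (convex_Icc s t)
      (fun τ hτ => (hE τ hτ).continuousAt.continuousWithinAt)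
      (fun τ hτ => (hE τ (interior_subset hτ)).differentiableAt.differentiableWithinAt)
      (fun τ hτ => ?_)
    rw [(hE τ (interior_subset hτ)).deriv]
    positivity
  have hEconst : ∀ τ ∈ Icc s t, E τ = E s := fun τ hτ =>
    le_antisymm (by simpa [E, hxst] using hEmono hτ ⟨hτ.1.trans hτ.2, le_rfl⟩ hτ.2)
      (hEmono ⟨le_rfl, hτ.1.trans hτ.2⟩ hτ hτ.1)
  intro τ hτ
  have hloc : E =ᶠ[𝓝 τ] fun _ => E s :=
    eventually_of_mem (Ioo_mem_nhds hτ.1 hτ.2) fun σ hσ => hEconst σ (Ioo_subset_Icc_self hσ)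
  have hsq : f (x τ) ^ 2 = 0 :=
    (hE τ (Ioo_subset_Icc_self hτ)).unique ((hasDerivAt_const τ (E s)).congr_of_eventuallyEq hloc)
  rw [hode τ (Ioo_subset_Icc_self hτ), pow_eq_zero_iff two_ne_zero |>.1 hsq]

theorem noReturnOn_of_deriv_eq_comp {T : Set ℝ} (hT : T.OrdConnected) (hf : Continuous f)
    (hx : Differentiable ℝ x) (hode : ∀ t ∈ T, deriv x t = f (x t)) : NoReturnOn x T := by
  intro s hs t ht hst hxst u hu
  have hderiv := deriv_eq_zero_of_mem_Ioo_of_eq hf hx (fun τ hτ => hode τ (hT.out hs ht hτ)) hxst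
  have hmono : MonotoneOn x (Icc s t) :=
    monotoneOn_of_deriv_nonneg (convex_Icc s t) hx.continuous.continuousOn hx.differentiableOn
      fun τ hτ => (hderiv τ (by rwa [interior_Icc] at hτ)).ge
  have hanti : AntitoneOn x (Icc s t) :=
    antitoneOn_of_deriv_nonpos (convex_Icc s t) hx.continuous.continuousOn hx.differentiableOn
      fun τ hτ => (hderiv τ (by rwa [interior_Icc] at hτ)).le
  exact le_antisymm (hanti ⟨le_rfl, hst⟩ hu hu.1) (hmono ⟨le_rfl, hst⟩ hu hu.1)

end AutonomousODE

theorem first_order_autonomous_monotone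
    (T : Set ℝ) (hT : T.OrdConnected) (f : ℝ → ℝ) (hf : Continuous f)
    (x : ℝ → ℝ) (hx : Differentiable ℝ x)
    (hode : ∀ t ∈ T, deriv x t = f (x t)) :
    (MonotoneOn x T ∨ AntitoneOn x T) ∧
      (∀ t₁ ∈ T, ∀ t₂ ∈ T, t₁ < t₂ → x t₁ = x t₂ →
        ∀ t ∈ Set.Icc t₁ t₂, x t = x t₁) := by
  have hnoReturn : NoReturnOn x T := noReturnOn_of_deriv_eq_comp hT hf hx hode
  exact ⟨hnoReturn.monotoneOn_or_antitoneOn hT hx.continuous.continuousOn,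
    fun t₁ h₁ t₂ h₂ h₁₂ => hnoReturn t₁ h₁ t₂ h₂ h₁₂.le⟩
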